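/- (α-JC₂) Let K be a field of characteristic zero and let α be the exchange involution of K[X,Y] (α(X) = Y, α(Y) = X). If f: K[X,Y] → K[X,Y] is a K-algebra endomorphism commuting with α and satisfying Jac(f(X), f(Y)) = 1, then f is an automorphism of K[X,Y]. -/

import Mathlib

open scoped BigOperators

open MvPolynomial

variable (K : Type*) [Field K]

/-- The Jacobian of a pair of polynomials in two variables. -/
noncomputable def Jac (P Q : MvPolynomial (Fin 2) K) : MvPolynomial (Fin 2) K :=
  pderiv 0 P * pderiv 1 Q - pderiv 1 P * pderiv 0 Q

/-- The exchange involution `α` of `K[X,Y]` with `α(X) = Y`, `α(Y) = X`. -/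
noncomputable def polyAlpha : MvPolynomial (Fin 2) K →ₐ[K] MvPolynomial (Fin 2) K :=
  aeval ![X 1, X 0]

/-!
Conjugating by the involution `θ : (X, Y) ↦ (X, X - Y)`, whose Jacobian is constant, gives a
Jacobian-one endomorphism `g = θ f θ` with `g(Y) = θ(f(X - Y))`. As `f` commutes with `α`,
`f(X - Y)` is `α`-anti-invariant, hence vanishes on the diagonal, so `r = g(Y)` vanishes on
`y = 0`. Put `s = g(X)`. On the line `y = 0` the Jacobian condition reads
`∂ₓs(x, 0) · ∂ᵧr(x, 0) = 1`, so both factors are nonzero constants, which pins down the Newton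
polygons near the axis: `s` has no `xⁱ` with `i ≥ 2`, and `r` has no pure power of `x` and no
`xᵏ y` with `k ≥ 1`.

If `r` involved `x`, take the least `τ ≥ 0` for which the weight `i - τ j` of the monomials
`xⁱ yʲ` is at most `1` on the support of `s` and at most `-τ` on that of `r`, and let `xⁱ yʲ`,
`xᵏ yˡ` be the extreme monomials of `s` and `r` (ties broken by the power of `y`). In
`xy · Jac(s, r) = xy` the coefficient of `x^(i+k) y^(j+l)` is `(il - jk)` times a nonzero
product. Minimality of `τ` puts a monomial off the axis on one of the extreme lines, so
`j + l ≥ 2` and that coefficient vanishes; but the weight equations `i = 1 + τ j`,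
`k = τ (l - 1)` give `il - jk = l + τ j > 0`. Hence `r = b y`, then `∂ₓs = a` with `ab = 1`, so
`g` is the triangular automorphism `(a x + q(y), b y)`.
-/

namespace MvPolynomial

variable {σ : Type*}

section CommSemiring

variable {R : Type*} [CommSemiring R]

theorem coeff_X_mul_pderiv (i : σ) (p : MvPolynomial σ R) (m : σ →₀ ℕ) :
    coeff m (X i * pderiv i p) = m i * coeff m p := by
  classical
  induction p using MvPolynomial.induction_on' with
  | monomial n a =>
    rw [X_mul_pderiv_monomial, coeff_smul, coeff_monomial]
    split_ifs with h
    · rw [h, nsmul_eq_mul]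
    · simp
  | add p q hp hq => rw [map_add, mul_add, coeff_add, coeff_add, hp, hq, mul_add]

theorem support_X_mul_pderiv_subset (i : σ) (p : MvPolynomial σ R) :
    (X i * pderiv i p).support ⊆ p.support := fun m hm ↦ by
  rw [mem_support_iff, coeff_X_mul_pderiv] at hm
  exact mem_support_iff.mpr <| right_ne_zero_of_mul hm

theorem coeff_add_mul_of_uniqueAdd {p q : MvPolynomial σ R} {a b : σ →₀ ℕ}
    (h : UniqueAdd p.support q.support a b) :
    coeff (a + b) (p * q) = coeff a p * coeff b q :=
  AddMonoidAlgebra.coeff_mul_add_of_uniqueAdd h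

theorem coeff_aeval_of_eq_zero {i : σ} {v : σ → MvPolynomial σ R} (hi : v i = 0)
    (hv : ∀ j ≠ i, v j = X j) (p : MvPolynomial σ R) (m : σ →₀ ℕ) :
    coeff m (aeval v p) = if m i = 0 then coeff m p else 0 := by
  classical
  induction p using MvPolynomial.induction_on' with
  | monomial n a =>
    rw [aeval_monomial, coeff_monomial]
    by_cases hn : n i = 0
    · have : (n.prod fun j k ↦ v j ^ k) = n.prod fun j k ↦ X j ^ k :=
        Finsupp.prod_congr fun j hj ↦ by
          rw [hv j (by rintro rfl; exact Finsupp.mem_support_iff.mp hj hn)]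
      rw [this, algebraMap_eq, ← monomial_eq, coeff_monomial]
      split_ifs <;> simp_all
    · have : (n.prod fun j k ↦ v j ^ k) = 0 :=
        Finset.prod_eq_zero (Finsupp.mem_support_iff.mpr hn) (by simp [hi, hn])
      rw [this, mul_zero, coeff_zero]
      split_ifs <;> simp_all
  | add p q hp hq => rw [map_add, coeff_add, coeff_add, hp, hq]; split_ifs <;> simp

theorem pderiv_algHom_apply {τ : Type*} [Fintype σ]
    (φ : MvPolynomial σ R →ₐ[R] MvPolynomial τ R) (i : τ) (p : MvPolynomial σ R) :
    pderiv i (φ p) = ∑ j, φ (pderiv j p) * pderiv i (φ (X j)) := by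
  classical
  induction p using MvPolynomial.induction_on with
  | C a => simp [← algebraMap_eq]
  | add p q hp hq => simp only [map_add, hp, hq, add_mul, Finset.sum_add_distrib]
  | mul_X p n hp =>
    simp only [map_mul, Derivation.leibniz, pderiv_X, smul_eq_mul, hp, map_add, add_mul,
      Finset.sum_add_distrib, Pi.single_apply, mul_ite, mul_one, mul_zero, apply_ite φ, map_zero,
      ite_mul, zero_mul, Finset.sum_ite_eq, Finset.mem_univ, if_true, Finset.mul_sum, mul_assoc]

end CommSemiring

theorem eq_C_of_pderiv_eq_zero {R : Type*} [CommRing R] [IsDomain R] [CharZero R]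
    {p : MvPolynomial σ R} (h : ∀ i, pderiv i p = 0) : p = C (coeff 0 p) := by
  classical
  ext m
  rw [coeff_C]
  split_ifs with hm
  · rw [hm]
  · obtain ⟨i, hi⟩ : ∃ i, m i ≠ 0 := by
      by_contra! h0; exact hm (Finsupp.ext h0).symm
    have := coeff_X_mul_pderiv i p m
    rw [h i, mul_zero, coeff_zero, eq_comm, mul_eq_zero] at this
    exact this.resolve_left (by exact_mod_cast hi)

theorem exists_eq_C_of_mul_eq_one {F : Type*} [Field F] {p q : MvPolynomial σ F}
    (h : p * q = 1) : ∃ a b : F, a * b = 1 ∧ p = C a ∧ q = C b := by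
  obtain ⟨a, -, rfl⟩ := isUnit_iff_eq_C_of_isReduced.mp (IsUnit.of_mul_eq_one q h)
  obtain ⟨b, -, rfl⟩ := isUnit_iff_eq_C_of_isReduced.mp (IsUnit.of_mul_eq_one_right (C a) h)
  exact ⟨a, b, C_injective σ F (by rw [map_mul, h, map_one]), rfl, rfl⟩

end MvPolynomial

theorem UniqueAdd.of_forall_lt {M Γ : Type*} [AddCommMonoid M] [AddCommMonoid Γ] [LinearOrder Γ]
    [IsOrderedCancelAddMonoid Γ] (key : M →+ Γ) {A B : Finset M} {a b : M}
    (ha : ∀ m ∈ A, m ≠ a → key m < key a) (hb : ∀ n ∈ B, n ≠ b → key n < key b) :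
    UniqueAdd A B a b := by
  intro m n hm hn h
  have hkey : key m + key n = key a + key b := by rw [← map_add, ← map_add, h]
  by_contra hne
  rcases not_and_or.mp hne with hma | hnb
  · have hnb : key n ≤ key b := by
      rcases eq_or_ne n b with rfl | hnb
      exacts [le_rfl, (hb n hn hnb).le]
    exact hkey.not_lt (add_lt_add_of_lt_of_le (ha m hm hma) hnb)
  · have hma : key m ≤ key a := by
      rcases eq_or_ne m a with rfl | hma
      exacts [le_rfl, (ha m hm hma).le]
    exact hkey.not_lt (add_lt_add_of_le_of_lt hma (hb n hn hnb))

theorem Finset.exists_forall_lt_of_injective {α β : Type*} [LinearOrder β] {f : α → β}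
    (hf : Function.Injective f) {A : Finset α} (hA : A.Nonempty) :
    ∃ a ∈ A, ∀ m ∈ A, m ≠ a → f m < f a := by
  obtain ⟨a, ha, hmax⟩ := A.exists_max_image f hA
  exact ⟨a, ha, fun m hm hne ↦ (hmax m hm).lt_of_ne (hf.ne hne)⟩

theorem AlgEquiv.bijective_of_conj {R A : Type*} [CommSemiring R] [Semiring A] [Algebra R A]
    (e : A ≃ₐ[R] A) {f : A →ₐ[R] A}
    (h : Function.Bijective ((e.symm : A →ₐ[R] A).comp (f.comp (e : A →ₐ[R] A)))) :
    Function.Bijective f := by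
  have hf : ⇑f = e ∘ (e.symm : A →ₐ[R] A).comp (f.comp (e : A →ₐ[R] A)) ∘ e.symm := by
    funext p
    simp
  rw [hf]
  exact e.bijective.comp (h.comp e.symm.bijective)

theorem exists_tight_slope (E : Finset (ℕ × ℕ)) (hE : ∀ p ∈ E, 2 ≤ p.1 → 1 ≤ p.2)
    (hne : ∃ p ∈ E, 2 ≤ p.1) :
    ∃ τ : ℚ, 0 ≤ τ ∧ (∀ p ∈ E, (p.1 : ℚ) ≤ 1 + τ * p.2) ∧
      ∃ p ∈ E, 1 ≤ p.2 ∧ (p.1 : ℚ) = 1 + τ * p.2 := by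
  obtain ⟨p, hp, hmax⟩ := (E.filter (2 ≤ ·.1)).exists_max_image
    (fun p ↦ ((p.1 : ℚ) - 1) / p.2) (by simpa [Finset.Nonempty] using hne)
  rw [Finset.mem_filter] at hp
  have hp₁ : (2 : ℚ) ≤ p.1 := by exact_mod_cast hp.2
  have hp₂ : (0 : ℚ) < p.2 := by exact_mod_cast hE p hp.1 hp.2
  have hτ : 0 ≤ ((p.1 : ℚ) - 1) / p.2 := div_nonneg (by linarith) hp₂.le
  refine ⟨_, hτ, fun q hq ↦ ?_, p, hp.1, hE p hp.1 hp.2, by field_simp; ring⟩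
  by_cases hq₁ : 2 ≤ q.1
  · have hq₂ : (0 : ℚ) < q.2 := by exact_mod_cast hE q hq hq₁
    have := hmax q (Finset.mem_filter.mpr ⟨hq, hq₁⟩)
    rw [div_le_iff₀ hq₂] at this
    linarith
  · have : (q.1 : ℚ) ≤ 1 := by exact_mod_cast (by omega : q.1 ≤ 1)
    nlinarith [mul_nonneg hτ (Nat.cast_nonneg (α := ℚ) q.2)]

section Plane

variable {K}

local notation "K[X,Y]" => MvPolynomial (Fin 2) K

noncomputable def jacobian (φ : K[X,Y] →ₐ[K] K[X,Y]) : K[X,Y] :=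
  Jac K (φ (X 0)) (φ (X 1))

theorem jac_map (φ : K[X,Y] →ₐ[K] K[X,Y]) (p q : K[X,Y]) :
    Jac K (φ p) (φ q) = φ (Jac K p q) * jacobian φ := by
  simp only [Jac, jacobian, pderiv_algHom_apply φ _ p, pderiv_algHom_apply φ _ q,
    Fin.sum_univ_two, map_sub, map_mul]
  ring

theorem jacobian_comp (φ ψ : K[X,Y] →ₐ[K] K[X,Y]) :
    jacobian (φ.comp ψ) = φ (jacobian ψ) * jacobian φ :=
  jac_map φ _ _

theorem jacobian_id : jacobian (AlgHom.id K K[X,Y]) = 1 := by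
  rw [jacobian, Jac, AlgHom.id_apply, AlgHom.id_apply, pderiv_X_self, pderiv_X_self,
    pderiv_X_of_ne one_ne_zero]
  ring

theorem jacobian_conj_eq_one (e : K[X,Y] ≃ₐ[K] K[X,Y]) {f : K[X,Y] →ₐ[K] K[X,Y]}
    (hf : jacobian f = 1) (he : f (jacobian e) = jacobian e) :
    jacobian ((e.symm : K[X,Y] →ₐ[K] K[X,Y]).comp (f.comp e)) = 1 := by
  rw [jacobian_comp, jacobian_comp, hf, mul_one, he, ← jacobian_comp, AlgEquiv.symm_comp,
    jacobian_id]

theorem coeff_X_mul_X_mul_jac {Γ : Type*} [AddCommMonoid Γ] [LinearOrder Γ]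
    [IsOrderedCancelAddMonoid Γ] (key : (Fin 2 →₀ ℕ) →+ Γ) {s r : K[X,Y]} {a b : Fin 2 →₀ ℕ}
    (hs : ∀ m ∈ s.support, m ≠ a → key m < key a) (hr : ∀ m ∈ r.support, m ≠ b → key m < key b) :
    coeff (a + b) (X 0 * X 1 * Jac K s r) =
      (((a 0 * b 1 : ℕ) : K) - (a 1 * b 0 : ℕ)) * (coeff a s * coeff b r) := by
  -- multiplying by `X 0 * X 1` turns `∂ᵢ` into the Euler operators `Xᵢ ∂ᵢ`, which shrink supports
  have hEuler : X 0 * X 1 * Jac K s r =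
      X 0 * pderiv 0 s * (X 1 * pderiv 1 r) - X 1 * pderiv 1 s * (X 0 * pderiv 0 r) := by
    rw [Jac]; ring
  have hunique (i j : Fin 2) :
      UniqueAdd (X i * pderiv i s).support (X j * pderiv j r).support a b :=
    .of_forall_lt key (fun m hm ↦ hs m (support_X_mul_pderiv_subset i s hm))
      (fun m hm ↦ hr m (support_X_mul_pderiv_subset j r hm))
  rw [hEuler, coeff_sub, coeff_add_mul_of_uniqueAdd (hunique 0 1),
    coeff_add_mul_of_uniqueAdd (hunique 1 0), coeff_X_mul_pderiv, coeff_X_mul_pderiv,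
    coeff_X_mul_pderiv, coeff_X_mul_pderiv]
  push_cast
  ring

theorem mul_eq_mul_of_jac_eq_one [CharZero K] {Γ : Type*} [AddCommMonoid Γ] [LinearOrder Γ]
    [IsOrderedCancelAddMonoid Γ] (key : (Fin 2 →₀ ℕ) →+ Γ) {s r : K[X,Y]} {a b : Fin 2 →₀ ℕ}
    (hJ : Jac K s r = 1) (ha : a ∈ s.support) (hb : b ∈ r.support)
    (hs : ∀ m ∈ s.support, m ≠ a → key m < key a) (hr : ∀ m ∈ r.support, m ≠ b → key m < key b)
    (hab : a + b ≠ Finsupp.single 0 1 + Finsupp.single 1 1) :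
    a 0 * b 1 = a 1 * b 0 := by
  have h := coeff_X_mul_X_mul_jac key hs hr
  rw [hJ, mul_one, X, X, monomial_mul, one_mul, coeff_monomial, if_neg hab.symm] at h
  have := (mul_eq_zero.mp h.symm).resolve_right
    (mul_ne_zero (mem_support_iff.mp ha) (mem_support_iff.mp hb))
  exact_mod_cast sub_eq_zero.mp this

def slopeWeight (τ : ℚ) (m : Fin 2 →₀ ℕ) : ℚ := m 0 - τ * m 1

def slopeKey (τ : ℚ) : (Fin 2 →₀ ℕ) →+ ℚ ×ₗ ℕ where
  toFun m := toLex (slopeWeight τ m, m 1)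
  map_zero' := by simp [slopeWeight]
  map_add' m n := by
    simp only [slopeWeight, Finsupp.add_apply, Nat.cast_add, ← toLex_add, Prod.mk_add_mk, mul_add,
      add_sub_add_comm]

theorem slopeKey_injective (τ : ℚ) : Function.Injective (slopeKey τ) := by
  intro m n h
  simp only [slopeKey, AddMonoidHom.coe_mk, ZeroHom.coe_mk, toLex_inj, Prod.mk.injEq,
    slopeWeight] at h
  ext i
  fin_cases i
  · have := h.1; rw [h.2] at this; exact_mod_cast (by linarith : ((m 0 : ℕ) : ℚ) = n 0)
  · exact h.2

theorem slopeWeight_eq_and_le_of_forall_slopeKey_lt {τ c : ℚ} {A : Finset (Fin 2 →₀ ℕ)}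
    {a n : Fin 2 →₀ ℕ} (hmax : ∀ m ∈ A, m ≠ a → slopeKey τ m < slopeKey τ a)
    (hbound : ∀ m ∈ A, slopeWeight τ m ≤ c) (ha : a ∈ A) (hn : n ∈ A) (hnc : slopeWeight τ n = c) :
    slopeWeight τ a = c ∧ n 1 ≤ a 1 := by
  have hle : slopeKey τ n ≤ slopeKey τ a := by
    rcases eq_or_ne n a with rfl | hne
    exacts [le_rfl, (hmax n hn hne).le]
  rcases Prod.Lex.toLex_le_toLex.mp hle with hlt | ⟨heq, hle⟩
  · exact absurd (hbound a ha) (by dsimp at hlt; linarith)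
  · exact ⟨hnc ▸ (heq : slopeWeight τ n = slopeWeight τ a).symm, hle⟩

noncomputable def yToZero : K[X,Y] →ₐ[K] K[X,Y] := aeval ![X 0, 0]

theorem coeff_yToZero (p : K[X,Y]) (m : Fin 2 →₀ ℕ) :
    coeff m (yToZero p) = if m 1 = 0 then coeff m p else 0 :=
  coeff_aeval_of_eq_zero rfl (fun j hj ↦ by fin_cases j <;> simp at hj ⊢) p m

theorem yToZero_pderiv_zero (p : K[X,Y]) : yToZero (pderiv 0 p) = pderiv 0 (yToZero p) := by
  ext m
  simp [coeff_yToZero, coeff_pderiv]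

theorem yToZero_mul_eq_one {s r : K[X,Y]} (hJ : Jac K s r = 1) (hr : yToZero r = 0) :
    yToZero (pderiv 0 s) * yToZero (pderiv 1 r) = 1 := by
  have := congrArg yToZero hJ
  rwa [Jac, map_sub, map_mul, map_mul, yToZero_pderiv_zero r, hr, map_zero, mul_zero, sub_zero,
    map_one] at this

theorem newton_left_of_yToZero_pderiv_zero_eq_C [CharZero K] {s : K[X,Y]} {a : K} (ha : a ≠ 0)
    (hs : yToZero (pderiv 0 s) = C a) :
    (∀ m ∈ s.support, 2 ≤ m 0 → 1 ≤ m 1) ∧ Finsupp.single 0 1 ∈ s.support := by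
  have hline (m : Fin 2 →₀ ℕ) (hm : m 1 = 0) :
      (m 0 : K) * coeff m s = if Finsupp.single 0 1 = m then a else 0 := by
    have := congrArg (fun p ↦ coeff m (X 0 * p)) hs
    rwa [show X 0 * yToZero (pderiv 0 s) = yToZero (X 0 * pderiv 0 s) by simp [yToZero],
      coeff_yToZero, if_pos hm, coeff_X_mul_pderiv, mul_comm (X 0), C_mul_X_eq_monomial,
      coeff_monomial] at this
  refine ⟨fun m hm h₂ ↦ ?_, ?_⟩
  · by_contra! h₁
    have := hline m (by omega)
    rw [if_neg (fun h ↦ by rw [← h] at h₂; simp at h₂), mul_eq_zero] at this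
    exact this.elim (by exact_mod_cast (by omega : m 0 ≠ 0)) (mem_support_iff.mp hm)
  · have := hline (Finsupp.single 0 1) (by simp)
    rw [Finsupp.single_eq_same, if_pos rfl, Nat.cast_one, one_mul] at this
    exact mem_support_iff.mpr (this ▸ ha)

theorem newton_right_of_yToZero_pderiv_one_eq_C {r : K[X,Y]} {b : K} (hb : b ≠ 0)
    (hr : yToZero r = 0) (hry : yToZero (pderiv 1 r) = C b) :
    (∀ m ∈ r.support, 1 ≤ m 1 ∧ (1 ≤ m 0 → 2 ≤ m 1)) ∧ Finsupp.single 1 1 ∈ r.support := by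
  have hline (m : Fin 2 →₀ ℕ) (hm : m 1 = 0) :
      coeff (m + Finsupp.single 1 1) r = if 0 = m then b else 0 := by
    have := congrArg (coeff m) hry
    simpa [coeff_yToZero, coeff_pderiv, hm, coeff_C] using this
  have hr₁ (m) (hm : m ∈ r.support) : 1 ≤ m 1 := by
    by_contra! h
    have := congrArg (coeff m) hr
    rw [coeff_yToZero, if_pos (by omega), coeff_zero] at this
    exact mem_support_iff.mp hm this
  refine ⟨fun m hm ↦ ⟨hr₁ m hm, fun h₀ ↦ ?_⟩, ?_⟩
  · by_contra! h₂
    have hm' : m = Finsupp.single 0 (m 0) + Finsupp.single 1 1 := by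
      have := hr₁ m hm
      ext i; fin_cases i <;> simp [show m 1 = 1 by omega]
    have := hline (Finsupp.single 0 (m 0)) (by simp)
    rw [← hm', if_neg (fun h ↦ by rw [eq_comm, Finsupp.single_eq_zero] at h; omega)] at this
    exact mem_support_iff.mp hm this
  · have := hline 0 rfl
    rw [zero_add, if_pos rfl] at this
    exact mem_support_iff.mpr (this ▸ hb)

theorem exists_tight_slope_of_newton {A B : Finset (Fin 2 →₀ ℕ)} (hA : ∀ m ∈ A, 2 ≤ m 0 → 1 ≤ m 1)
    (hB : ∀ m ∈ B, 1 ≤ m 1 ∧ (1 ≤ m 0 → 2 ≤ m 1)) (hB₀ : ∃ m ∈ B, m 0 ≠ 0) :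
    ∃ τ : ℚ, 0 ≤ τ ∧ (∀ m ∈ A, slopeWeight τ m ≤ 1) ∧ (∀ m ∈ B, slopeWeight τ m ≤ -τ) ∧
      ((∃ n ∈ A, 1 ≤ n 1 ∧ slopeWeight τ n = 1) ∨ ∃ n ∈ B, 2 ≤ n 1 ∧ slopeWeight τ n = -τ) := by
  -- the shift `(i, j) ↦ (i + 1, j - 1)` turns the bound `slopeWeight τ ≤ -τ` into `≤ 1`
  let E := A.image (fun m ↦ (m 0, m 1)) ∪ B.image (fun m ↦ (m 0 + 1, m 1 - 1))
  have hcast : ∀ m ∈ B, ((m 1 - 1 : ℕ) : ℚ) = m 1 - 1 := fun m hm ↦ by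
    have := (hB m hm).1; push_cast [this]; rfl
  obtain ⟨m, hm, hm₀⟩ := hB₀
  obtain ⟨τ, hτ, hbound, p, hpE, hp₁, hp⟩ := exists_tight_slope E
    (by
      simp only [E, Finset.mem_union, Finset.mem_image]
      rintro _ (⟨m, hm, rfl⟩ | ⟨m, hm, rfl⟩) h
      exacts [hA m hm h, by have := (hB m hm).2 (by omega); omega])
    ⟨_, Finset.mem_union_right _ (Finset.mem_image_of_mem _ hm), by omega⟩
  refine ⟨τ, hτ, fun m hm ↦ ?_, fun m hm ↦ ?_, ?_⟩
  · have := hbound _ (Finset.mem_union_left _ (Finset.mem_image_of_mem _ hm))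
    simp only [slopeWeight] at this ⊢; linarith
  · have := hbound _ (Finset.mem_union_right _ (Finset.mem_image_of_mem _ hm))
    simp only [slopeWeight, Nat.cast_add, Nat.cast_one, hcast m hm] at this ⊢; linarith
  simp only [E, Finset.mem_union, Finset.mem_image] at hpE
  rcases hpE with ⟨n, hn, rfl⟩ | ⟨n, hn, rfl⟩
  · exact .inl ⟨n, hn, hp₁, by simp only [slopeWeight] at hp ⊢; linarith⟩
  · refine .inr ⟨n, hn, by omega, ?_⟩
    simp only [slopeWeight, Nat.cast_add, Nat.cast_one, hcast n hn] at hp ⊢; linarith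

theorem forall_mem_support_eq_zero_of_jac_eq_one [CharZero K] {s r : K[X,Y]}
    (hJ : Jac K s r = 1) (hs : ∀ m ∈ s.support, 2 ≤ m 0 → 1 ≤ m 1)
    (hs₀ : Finsupp.single 0 1 ∈ s.support) (hr : ∀ m ∈ r.support, 1 ≤ m 1 ∧ (1 ≤ m 0 → 2 ≤ m 1))
    (hr₀ : Finsupp.single 1 1 ∈ r.support) :
    ∀ m ∈ r.support, m 0 = 0 := by
  by_contra! hB₀
  obtain ⟨τ, hτ, hws, hwr, hexc⟩ := exists_tight_slope_of_newton hs hr hB₀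
  obtain ⟨a, ha, hamax⟩ := Finset.exists_forall_lt_of_injective (slopeKey_injective τ) ⟨_, hs₀⟩
  obtain ⟨b, hb, hbmax⟩ := Finset.exists_forall_lt_of_injective (slopeKey_injective τ) ⟨_, hr₀⟩
  have hwa :=
    (slopeWeight_eq_and_le_of_forall_slopeKey_lt hamax hws ha hs₀ (by simp [slopeWeight])).1
  have hwb :=
    (slopeWeight_eq_and_le_of_forall_slopeKey_lt hbmax hwr hb hr₀ (by simp [slopeWeight])).1
  have hb₁ := (hr b hb).1
  have hhigh : 1 ≤ a 1 ∨ 2 ≤ b 1 := by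
    rcases hexc with ⟨n, hn, hn₁, hwn⟩ | ⟨n, hn, hn₁, hwn⟩
    exacts [.inl (hn₁.trans (slopeWeight_eq_and_le_of_forall_slopeKey_lt hamax hws ha hn hwn).2),
      .inr (hn₁.trans (slopeWeight_eq_and_le_of_forall_slopeKey_lt hbmax hwr hb hn hwn).2)]
  have hvertex : (a 0 * b 1 : ℚ) = a 1 * b 0 := by
    refine mod_cast mul_eq_mul_of_jac_eq_one (slopeKey τ) hJ ha hb hamax hbmax fun h ↦ ?_
    have := congrArg (· 1) h
    rw [Finsupp.add_apply, Finsupp.add_apply, Finsupp.single_eq_same,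
      Finsupp.single_eq_of_ne (by decide)] at this
    omega
  have hb₁' : (1 : ℚ) ≤ b 1 := by exact_mod_cast hb₁
  simp only [slopeWeight] at hwa hwb
  nlinarith [mul_nonneg hτ (Nat.cast_nonneg (α := ℚ) (a 1))]

theorem pderiv_zero_eq_zero_of_jac_eq_one [CharZero K] {s r : K[X,Y]} (hJ : Jac K s r = 1)
    (hr : yToZero r = 0) : pderiv 0 r = 0 := by
  obtain ⟨a, b, hab, hsa, hrb⟩ := exists_eq_C_of_mul_eq_one (yToZero_mul_eq_one hJ hr)
  obtain ⟨hs, hs₀⟩ := newton_left_of_yToZero_pderiv_zero_eq_C (left_ne_zero_of_mul_eq_one hab) hsa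
  obtain ⟨hr', hr₀⟩ :=
    newton_right_of_yToZero_pderiv_one_eq_C (right_ne_zero_of_mul_eq_one hab) hr hrb
  have hr₀ := forall_mem_support_eq_zero_of_jac_eq_one hJ hs hs₀ hr' hr₀
  ext m
  rw [coeff_pderiv, coeff_zero, mul_eq_zero]
  refine .inl (not_ne_iff.mp fun h ↦ ?_)
  simpa using hr₀ _ (mem_support_iff.mpr h)

theorem eq_C_mul_X_one [CharZero K] {r : K[X,Y]} {b : K} (hx : pderiv 0 r = 0)
    (hy : pderiv 1 r = C b) (h₀ : yToZero r = 0) : r = C b * X 1 := by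
  have hconst := eq_C_of_pderiv_eq_zero (p := r - C b * X 1) fun i ↦ by
    fin_cases i <;> simp [hx, hy]
  have hcoeff : coeff 0 (r - C b * X 1) = 0 := by
    have := congrArg (coeff 0) h₀
    rw [coeff_yToZero, if_pos (Finsupp.zero_apply), coeff_zero] at this
    simp [this, C_mul_X_eq_monomial, coeff_monomial]
  rwa [hcoeff, C_0, sub_eq_zero] at hconst

theorem aeval_zero_X_one_of_pderiv_zero [CharZero K] {t : K[X,Y]} (ht : pderiv 0 t = 0) :
    aeval ![0, X 1] t = t := by
  ext m
  rw [coeff_aeval_of_eq_zero (i := 0) rfl (fun j hj ↦ by fin_cases j <;> simp at hj ⊢)]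
  split_ifs with h
  · rfl
  · have := coeff_X_mul_pderiv 0 t m
    rw [ht, mul_zero, coeff_zero, eq_comm, mul_eq_zero] at this
    exact (this.resolve_left (by exact_mod_cast h)).symm

theorem bijective_of_triangular [CharZero K] (g : K[X,Y] →ₐ[K] K[X,Y]) {a b : K} (ha : a ≠ 0)
    (hb : b ≠ 0) {t : K[X,Y]} (ht : pderiv 0 t = 0) (h₀ : g (X 0) = C a * X 0 + t)
    (h₁ : g (X 1) = C b * X 1) : Function.Bijective g := by
  let u : K[X,Y] := aeval ![0, C b⁻¹ * X 1] t
  let h : K[X,Y] →ₐ[K] K[X,Y] := aeval ![C a⁻¹ * (X 0 - u), C b⁻¹ * X 1]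
  have hC (c : K) : g (C c) = C c := g.commutes c
  have hgY : g (C b⁻¹ * X 1) = X 1 := by
    rw [map_mul, hC, h₁, ← mul_assoc, ← C_mul, inv_mul_cancel₀ hb, C_1, one_mul]
  have hgu : g u = t := by
    rw [← AlgHom.comp_apply, comp_aeval]
    convert aeval_zero_X_one_of_pderiv_zero ht using 3
    ext1 i; fin_cases i <;> simp [hgY]
  have hht : h t = u := by
    conv_lhs => rw [← aeval_zero_X_one_of_pderiv_zero ht]
    rw [← AlgHom.comp_apply, comp_aeval]
    congr 2
    ext1 i; fin_cases i <;> simp [h]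
  refine (AlgEquiv.ofAlgHom g h (algHom_ext fun i ↦ ?_) (algHom_ext fun i ↦ ?_)).bijective <;>
    fin_cases i
  · show g (h (X 0)) = X 0
    simp [h, hgu, h₀, ← mul_assoc, ← C_mul, inv_mul_cancel₀ ha]
  · show g (h (X 1)) = X 1
    simp [h, hgY]
  · show h (g (X 0)) = X 0
    rw [h₀, map_add, hht]
    simp [h, ← mul_assoc, ← C_mul, mul_inv_cancel₀ ha]
  · show h (g (X 1)) = X 1
    simp [h₁, h, ← mul_assoc, ← C_mul, mul_inv_cancel₀ hb]

theorem bijective_of_jacobian_eq_one [CharZero K] (g : K[X,Y] →ₐ[K] K[X,Y])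
    (hJ : jacobian g = 1) (hy : yToZero (g (X 1)) = 0) : Function.Bijective g := by
  have hx := pderiv_zero_eq_zero_of_jac_eq_one hJ hy
  have hJ' : pderiv 0 (g (X 0)) * pderiv 1 (g (X 1)) = 1 := by
    rw [← hJ, jacobian, Jac, hx, mul_zero, sub_zero]
  obtain ⟨a, b, hab, ha, hb⟩ := exists_eq_C_of_mul_eq_one hJ'
  refine bijective_of_triangular g (left_ne_zero_of_mul_eq_one hab)
    (right_ne_zero_of_mul_eq_one hab) (t := g (X 0) - C a * X 0) ?_ (by ring)
    (eq_C_mul_X_one hx hb hy)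
  rw [map_sub, ha, pderiv_C_mul, pderiv_X_self, mul_one, sub_self]

theorem polyAlpha_X_zero_sub_X_one : polyAlpha K (X 0 - X 1 : K[X,Y]) = -(X 0 - X 1) := by
  simp [polyAlpha]

theorem aeval_shear_comp_self :
    (aeval ![X 0, X 0 - X 1] : K[X,Y] →ₐ[K] K[X,Y]).comp (aeval ![X 0, X 0 - X 1]) =
      AlgHom.id K K[X,Y] :=
  algHom_ext fun i ↦ by fin_cases i <;> simp

noncomputable def shear : K[X,Y] ≃ₐ[K] K[X,Y] :=
  AlgEquiv.ofAlgHom _ _ aeval_shear_comp_self aeval_shear_comp_self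

@[simp] theorem shear_X_zero : shear (X 0 : K[X,Y]) = X 0 := by simp [shear]
@[simp] theorem shear_X_one : shear (X 1 : K[X,Y]) = X 0 - X 1 := by simp [shear]

theorem jacobian_shear : jacobian (shear (K := K) : K[X,Y] →ₐ[K] K[X,Y]) = -1 := by
  simp only [jacobian, Jac, AlgEquiv.coe_toAlgHom, shear_X_zero, shear_X_one, map_sub,
    pderiv_X_self, pderiv_X_of_ne one_ne_zero, pderiv_X_of_ne zero_ne_one]
  ring

theorem yToZero_shear_symm_polyAlpha (p : K[X,Y]) :
    yToZero (shear.symm (polyAlpha K p)) = yToZero (shear.symm p) := by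
  have : (yToZero.comp (((shear (K := K)).symm : K[X,Y] →ₐ[K] K[X,Y]).comp (polyAlpha K))) =
      yToZero.comp ((shear (K := K)).symm : K[X,Y] →ₐ[K] K[X,Y]) :=
    algHom_ext fun i ↦ by fin_cases i <;> simp [yToZero, polyAlpha, shear]
  exact congrArg (· p) (congrArg DFunLike.coe this)

theorem yToZero_shear_symm_eq_zero [CharZero K] {p : K[X,Y]} (hp : polyAlpha K p = -p) :
    yToZero (shear.symm p) = 0 := by
  have := yToZero_shear_symm_polyAlpha p
  rw [hp, map_neg, map_neg] at this
  exact self_eq_neg.mp this.symm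

end Plane

/-- α-JC₂: every α-endomorphism of `K[X,Y]` with Jacobian 1 is an automorphism. -/
theorem stmt_16 [CharZero K] (f : MvPolynomial (Fin 2) K →ₐ[K] MvPolynomial (Fin 2) K)
    (hcomm : ∀ p, f (polyAlpha K p) = polyAlpha K (f p))
    (hJ : Jac K (f (X 0)) (f (X 1)) = 1) :
    Function.Bijective f := by
  let e : MvPolynomial (Fin 2) K ≃ₐ[K] MvPolynomial (Fin 2) K := shear
  refine e.bijective_of_conj (bijective_of_jacobian_eq_one _ (jacobian_conj_eq_one e hJ ?_) ?_)
  · rw [jacobian_shear, map_neg, map_one]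
  · show yToZero (e.symm (f (e (X 1)))) = 0
    refine yToZero_shear_symm_eq_zero ?_
    rw [shear_X_one, ← hcomm, polyAlpha_X_zero_sub_X_one, map_neg]
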